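/- For a 2×2 density matrix ρ, the maximum of (1/2)‖[ρ,H]‖₁ over diagonal Hermitian H with Hilbert–Schmidt norm ‖H‖₂ ≤ 1 equals √2 |ρ₁₂|, attained at H = (1/√2)(|1⟩⟨1| − |2⟩⟨2|). -/

import Mathlib

open Matrix Complex
open scoped ComplexOrder

/-- Trace norm `‖A‖₁ = tr √(AᴴA)`. -/
noncomputable def traceNorm {d : ℕ} (A : Matrix (Fin d) (Fin d) ℂ) : ℝ :=
  ((Matrix.posSemidef_conjTranspose_mul_self A).1.eigenvectorUnitary.1 *
    diagonal (((↑) : ℝ → ℂ) ∘ (√·) ∘ (Matrix.posSemidef_conjTranspose_mul_self A).1.eigenvalues) *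
    (star (Matrix.posSemidef_conjTranspose_mul_self A).1.eigenvectorUnitary :
      Matrix (Fin d) (Fin d) ℂ)).trace.re

/-!
For a Hermitian qubit `ρ` and any diagonal `D`, the commutator `[ρ, D]` has zero diagonal and
off-diagonal entries `ρ₀₁ (d₁ - d₀)` and `ρ₁₀ (d₀ - d₁)` of equal modulus, so `[ρ, D]ᴴ [ρ, D]` is
the scalar `|ρ₀₁|² |d₁ - d₀|²`. Hence `½‖[ρ, D]‖₁ = |ρ₀₁| |d₁ - d₀|`, and on the unit
Hilbert–Schmidt ball `|d₁ - d₀| ≤ √2 √(d₀² + d₁²) ≤ √2`, with equality at `d = (1, -1)/√2`.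
-/

theorem traceNorm_eq_of_conjTranspose_mul_self_eq_smul_one {d : ℕ}
    {A : Matrix (Fin d) (Fin d) ℂ} {c : ℝ} (hc : 0 ≤ c) (hA : Aᴴ * A = (c ^ 2 : ℝ) • 1) :
    traceNorm A = d * c := by
  have heig : ∀ i, (posSemidef_conjTranspose_mul_self A).1.eigenvalues i = c ^ 2 := by
    intro i
    have : Nonempty (Fin d) := ⟨i⟩
    have hspec : spectrum ℝ (Aᴴ * A) = {c ^ 2} := by
      rw [hA, ← Algebra.algebraMap_eq_smul_one, spectrum.scalar_eq]
    simpa [hspec] using (posSemidef_conjTranspose_mul_self A).1.eigenvalues_mem_spectrum_real i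
  unfold traceNorm
  rw [trace_mul_cycle, Unitary.coe_star_mul_self, one_mul]
  simp [trace, heig, Real.sqrt_sq hc]

theorem traceNorm_eq_two_mul_norm_of_diag_eq_zero {A : Matrix (Fin 2) (Fin 2) ℂ} (h₀ : A 0 0 = 0)
    (h₁ : A 1 1 = 0) (hnorm : ‖A 1 0‖ = ‖A 0 1‖) :
    traceNorm A = 2 * ‖A 0 1‖ := by
  refine traceNorm_eq_of_conjTranspose_mul_self_eq_smul_one (norm_nonneg _) ?_
  ext i j
  fin_cases i <;> fin_cases j <;>
    simp [mul_apply, Fin.sum_univ_two, h₀, h₁, ← hnorm, conj_mul']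

theorem commutator_diagonal_apply {n R : Type*} [Fintype n] [DecidableEq n] [CommRing R]
    (A : Matrix n n R) (d : n → R) (i j : n) :
    (A * diagonal d - diagonal d * A) i j = A i j * (d j - d i) := by
  simp only [Matrix.sub_apply, mul_diagonal, diagonal_mul]
  ring

theorem traceNorm_commutator_diagonal {ρ : Matrix (Fin 2) (Fin 2) ℂ} (hρ : ρ.IsHermitian)
    (d : Fin 2 → ℂ) :
    traceNorm (ρ * diagonal d - diagonal d * ρ) = 2 * (‖ρ 0 1‖ * ‖d 1 - d 0‖) := by
  have hρ₁₀ : ρ 1 0 = star (ρ 0 1) := (hρ.apply 1 0).symm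
  rw [traceNorm_eq_two_mul_norm_of_diag_eq_zero] <;>
    simp only [commutator_diagonal_apply, sub_self, mul_zero, norm_mul, hρ₁₀, norm_star,
      norm_sub_rev (d 0)]

theorem abs_sub_le_sqrt_two_mul_sqrt (a b : ℝ) : |a - b| ≤ √2 * √(a ^ 2 + b ^ 2) := by
  rw [← Real.sqrt_mul zero_le_two]
  exact Real.abs_le_sqrt (by nlinarith [sq_nonneg (a + b)])

theorem qubit_gradient_HS_general (ρ : Matrix (Fin 2) (Fin 2) ℂ)
    (hρ : ρ.PosSemidef) :
    IsGreatest {x : ℝ | ∃ h : Fin 2 → ℝ, Real.sqrt (∑ j, h j ^ 2) ≤ 1 ∧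
        x = (1 / 2) * traceNorm
          (ρ * Matrix.diagonal (fun j => (h j : ℂ))
            - Matrix.diagonal (fun j => (h j : ℂ)) * ρ)}
      (Real.sqrt 2 * ‖ρ 0 1‖) ∧
    (1 / 2) * traceNorm
        (ρ * Matrix.diagonal ![((1 / Real.sqrt 2 : ℝ) : ℂ), -((1 / Real.sqrt 2 : ℝ) : ℂ)]
          - Matrix.diagonal ![((1 / Real.sqrt 2 : ℝ) : ℂ), -((1 / Real.sqrt 2 : ℝ) : ℂ)] * ρ)
      = Real.sqrt 2 * ‖ρ 0 1‖ := by
  have hval (d : Fin 2 → ℂ) :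
      (1 / 2) * traceNorm (ρ * diagonal d - diagonal d * ρ) = ‖ρ 0 1‖ * ‖d 1 - d 0‖ := by
    rw [traceNorm_commutator_diagonal hρ.1]
    ring
  set a : ℝ := 1 / √2
  have ha : a ^ 2 + a ^ 2 = 1 := by
    simp only [a, div_pow, Real.sq_sqrt zero_le_two]
    norm_num
  have hgap : ‖-(a : ℂ) - a‖ = √2 := by
    rw [← ofReal_neg, ← ofReal_sub, norm_real, Real.norm_eq_abs, show -a - a = -(2 * a) by ring,
      abs_neg, abs_of_pos (by positivity)]
    simp only [a]
    field_simp
    simp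
  have hattained : (1 / 2) * traceNorm (ρ * diagonal ![(a : ℂ), -(a : ℂ)]
      - diagonal ![(a : ℂ), -(a : ℂ)] * ρ) = √2 * ‖ρ 0 1‖ := by
    rw [hval, mul_comm]
    simp [hgap]
  refine ⟨⟨⟨![a, -a], ?_, ?_⟩, ?_⟩, hattained⟩
  · simp [Fin.sum_univ_two, ha]
  · have hdiag : (fun j => ((![a, -a] j : ℝ) : ℂ)) = ![(a : ℂ), -(a : ℂ)] := by
      ext j; fin_cases j <;> simp
    rw [hdiag, hattained]
  · rintro x ⟨h, hh, rfl⟩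
    rw [hval, ← ofReal_sub, norm_real, Real.norm_eq_abs, mul_comm]
    gcongr
    calc |h 1 - h 0| ≤ √2 * √(h 1 ^ 2 + h 0 ^ 2) := abs_sub_le_sqrt_two_mul_sqrt _ _
      _ ≤ √2 := by
        rw [add_comm, ← Fin.sum_univ_two (fun j => h j ^ 2)]
        exact mul_le_of_le_one_right (by positivity) hh

/-- For a qubit density matrix `ρ`, the maximum of `(1/2)‖[ρ,H]‖₁` over real
diagonal `H` with Hilbert–Schmidt norm `‖H‖₂ ≤ 1` equals `√2 |ρ₁₂|`, attained
at `H = (1/√2)(|1⟩⟨1| − |2⟩⟨2|)`. -/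
theorem qubit_gradient_HS (ρ : Matrix (Fin 2) (Fin 2) ℂ)
    (hρ : ρ.PosSemidef) (htr : ρ.trace = 1) :
    IsGreatest {x : ℝ | ∃ h : Fin 2 → ℝ, Real.sqrt (∑ j, h j ^ 2) ≤ 1 ∧
        x = (1 / 2) * traceNorm
          (ρ * Matrix.diagonal (fun j => (h j : ℂ))
            - Matrix.diagonal (fun j => (h j : ℂ)) * ρ)}
      (Real.sqrt 2 * ‖ρ 0 1‖) ∧
    (1 / 2) * traceNorm
        (ρ * Matrix.diagonal ![((1 / Real.sqrt 2 : ℝ) : ℂ), -((1 / Real.sqrt 2 : ℝ) : ℂ)]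
          - Matrix.diagonal ![((1 / Real.sqrt 2 : ℝ) : ℂ), -((1 / Real.sqrt 2 : ℝ) : ℂ)] * ρ)
      = Real.sqrt 2 * ‖ρ 0 1‖ :=
  qubit_gradient_HS_general ρ hρ
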